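/- arXiv:1707.05506 — 3 statements merged into one kernel-verified Lean document; each statement's English description precedes it below -/
import Mathlib

section
/- Let G be a group, τ an involutive automorphism of G, and H a subgroup of the fixed-point group G^τ. Then the operation xH • yH := x τ(x)⁻¹ τ(y) H is a well-defined binary operation on the coset space G/H that satisfies the reflection space axioms (S1), (S2), (S3). -/
/-- Let `τ` be an involutive automorphism of a group `G` and `H ≤ G^τ` a
subgroup of the fixed-point group.  Then `xH • yH := x τ(x)⁻¹ τ(y) H` is a
well-defined binary operation on `G ⧸ H` satisfying the reflection space
axioms (S1), (S2), (S3). -/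
theorem coset_reflection_space {G : Type*} [Group G] (τ : G ≃* G)
    (hτ : ∀ g, τ (τ g) = g) (H : Subgroup G) (hH : ∀ h ∈ H, τ h = h) :
    ∃ μ : G ⧸ H → G ⧸ H → G ⧸ H,
      (∀ x y : G, μ (QuotientGroup.mk x) (QuotientGroup.mk y) =
        QuotientGroup.mk (x * (τ x)⁻¹ * τ y)) ∧
      (∀ a : G ⧸ H, μ a a = a) ∧
      (∀ a b : G ⧸ H, μ a (μ a b) = b) ∧
      (∀ a b c : G ⧸ H, μ a (μ b c) = μ (μ a b) (μ a c)) := by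
  have hresp : ∀ (a b a' b' : G), (QuotientGroup.leftRel H) a a' → (QuotientGroup.leftRel H) b b' →
      (QuotientGroup.leftRel H) (a * (τ a)⁻¹ * τ b) (a' * (τ a')⁻¹ * τ b') := by
    intro a b a' b' ha hb
    rw [QuotientGroup.leftRel_apply] at ha hb ⊢
    have e1 : τ a' = τ a * (a⁻¹ * a') := by
      rw [← hH _ ha, ← map_mul, mul_inv_cancel_left]
    have e2 : τ b' = τ b * (b⁻¹ * b') := by
      rw [← hH _ hb, ← map_mul, mul_inv_cancel_left]
    have key : (a * (τ a)⁻¹ * τ b)⁻¹ * (a' * (τ a')⁻¹ * τ b') = b⁻¹ * b' := by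
      rw [e1, e2]; group
    rw [key]; exact hb
  refine ⟨Quotient.map₂ (fun a b => a * (τ a)⁻¹ * τ b) (fun a a' ha b b' hb => hresp a b a' b' ha hb), ?_, ?_, ?_, ?_⟩
  · intro x y; rfl
  · intro a
    induction a using QuotientGroup.induction_on with
    | H x =>
      show QuotientGroup.mk (x * (τ x)⁻¹ * τ x) = QuotientGroup.mk x
      congr 1
      group
  · intro a b
    induction a using QuotientGroup.induction_on with
    | H x =>
      induction b using QuotientGroup.induction_on with
      | H y =>
        show QuotientGroup.mk (x * (τ x)⁻¹ * τ (x * (τ x)⁻¹ * τ y)) = QuotientGroup.mk y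
        congr 1
        simp only [map_mul, map_inv, hτ]
        group
  · intro a b c
    induction a using QuotientGroup.induction_on with
    | H x =>
      induction b using QuotientGroup.induction_on with
      | H y =>
        induction c using QuotientGroup.induction_on with
        | H z =>
          show QuotientGroup.mk (x * (τ x)⁻¹ * τ (y * (τ y)⁻¹ * τ z)) =
            QuotientGroup.mk ((x * (τ x)⁻¹ * τ y) * (τ (x * (τ x)⁻¹ * τ y))⁻¹ *
              τ (x * (τ x)⁻¹ * τ z))
          congr 1
          simp only [map_mul, map_inv, hτ]
          group
end

section
/- In a reflection space (M, •) with base point e, define powers by x⁰ = e, x¹ = x, x^{n+2} = x • (e • x^n) for n ≥ 0, and x^{-n} = e • x^n for n > 0. Then xⁿ • xᵐ = x^{2n−m} for all integers n, m. -/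
/-- In a reflection space `(M, •)` with base point `e`, the powers defined by
`x⁰ = e`, `x¹ = x`, `x^{n+2} = x • (e • xⁿ)` and `x^{-n} = e • xⁿ` satisfy
`xⁿ • xᵐ = x^{2n - m}` for all integers `n, m`. -/
theorem reflection_space_powers {M : Type*} (mul : M → M → M)
    (hS1 : ∀ x, mul x x = x)
    (hS2 : ∀ x y, mul x (mul x y) = y)
    (hS3 : ∀ x y z, mul x (mul y z) = mul (mul x y) (mul x z))
    (e : M) (x : M) (p : ℤ → M)
    (hp0 : p 0 = e) (hp1 : p 1 = x)
    (hprec : ∀ n : ℕ, p ((n : ℤ) + 2) = mul x (mul e (p n)))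
    (hpneg : ∀ n : ℕ, p (-(n : ℤ)) = mul e (p n)) :
    ∀ n m : ℤ, mul (p n) (p m) = p (2 * n - m) := by
  have L1 : ∀ n : ℤ, mul e (p n) = p (-n) := by
    intro n
    obtain ⟨k, rfl | rfl⟩ := n.eq_nat_or_neg
    · exact (hpneg k).symm
    · rw [hpneg k, hS2, neg_neg]
  have L2 : ∀ n : ℤ, mul x (p n) = p (2 - n) := by
    intro n
    obtain ⟨k, rfl | rfl⟩ := n.eq_nat_or_neg
    · match k with
      | 0 =>
        have h := hprec 0
        simp only [Nat.cast_zero] at h ⊢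
        rw [hp0, hS1] at h
        rw [hp0]
        simpa using h.symm
      | 1 =>
        simp only [Nat.cast_one]
        rw [hp1, hS1]
        norm_num [hp1]
      | Nat.succ (Nat.succ k) =>
        have hk : ((k + 2 : ℕ) : ℤ) = (k : ℤ) + 2 := by push_cast; ring
        rw [hk, hprec k, hS2, ← hpneg k]
        congr 1; ring
    · rw [hpneg k, ← hprec k]
      congr 1; ring
  set Q : ℤ → Prop := fun n => ∀ m : ℤ, mul (p n) (p m) = p (2 * n - m) with hQdef
  have hQ0 : Q 0 := by
    intro m; rw [hp0, L1, show -m = 2*0 - m by ring]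
  have hQ1 : Q 1 := by
    intro m; rw [hp1, L2, show 2 - m = 2*1 - m by ring]
  have step : ∀ n : ℤ, Q n → Q (n + 2) := by
    intro n hQ m
    have h1 : p (n + 2) = mul x (mul e (p n)) := by
      rw [L1 n, L2 (-n)]; congr 1; ring
    rw [h1]
    conv_lhs => rw [← hS2 x (p m)]
    rw [← hS3]
    conv_lhs => rw [← hS2 e (mul x (p m))]
    rw [← hS3 e]
    rw [L2 m, L1 (2 - m)]
    have h2 : p (-(2 - m)) = p (m - 2) := by congr 1; ring
    rw [h2, hQ (m - 2), L1, L2]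
    congr 1; ring
  have neg : ∀ n : ℤ, Q n → Q (-n) := by
    intro n hQ m
    rw [← L1 n]
    conv_lhs => rw [← hS2 e (p m)]
    rw [← hS3 e, L1 m, hQ (-m), L1]
    congr 1; ring
  have hnat : ∀ k : ℕ, Q (k : ℤ) := by
    intro k
    induction k using Nat.twoStepInduction with
    | zero => exact hQ0
    | one => exact hQ1
    | more k ih _ =>
      have hk : ((k + 2 : ℕ) : ℤ) = (k : ℤ) + 2 := by push_cast; ring
      rw [hk]
      exact step _ ih
  intro n m
  obtain ⟨k, rfl | rfl⟩ := n.eq_nat_or_neg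
  · exact hnat k m
  · exact neg _ (hnat k) m
end

section
/- Let (M, μ) be a dilation space, λ ∈ ℝ^×, and γ : ℝ → M a geodesic (morphism of the underlying reflection spaces, where x • y := x •_{−1} y). If γ(r^λ s) = γ(0) •_r γ(s) for all s ∈ ℝ and r > 0, then γ(t + r^λ(s − t)) = γ(t) •_r γ(s) for all t, s ∈ ℝ and r > 0. -/
/-- In a dilation space, a geodesic `γ` (for the underlying reflection
structure `• = •_{-1}`) satisfying `γ(r^λ s) = γ 0 •_r γ s` for `r > 0` also
satisfies `γ(t + r^λ (s - t)) = γ t •_r γ s` for all `t, s` and `r > 0`. -/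
theorem dilation_invariant_geodesic {M : Type*} (op : M → ℝ → M → M)
    (hD1 : ∀ (x : M) (r : ℝ), r ≠ 0 → op x r x = x)
    (hD2 : ∀ (x y : M) (r s : ℝ), r ≠ 0 → s ≠ 0 →
      op x r (op x s y) = op x (r * s) y)
    (hD3 : ∀ (x y z : M) (r s : ℝ), r ≠ 0 → s ≠ 0 →
      op x r (op y s z) = op (op x r y) s (op x r z))
    (lam : ℝ) (hlam : lam ≠ 0) (γ : ℝ → M)
    (hgeo : ∀ t s : ℝ, γ (2 * t - s) = op (γ t) (-1) (γ s))
    (hc : ∀ (s r : ℝ), 0 < r → γ (r ^ lam * s) = op (γ 0) r (γ s)) :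
    ∀ (t s r : ℝ), 0 < r → γ (t + r ^ lam * (s - t)) = op (γ t) r (γ s) := by
  intro t s r hr
  have hrne : r ≠ 0 := ne_of_gt hr
  have e1 : t + r ^ lam * (s - t) = 2 * (t / 2) - r ^ lam * (t - s) := by ring
  rw [e1, hgeo (t / 2) (r ^ lam * (t - s)), hc (t - s) r hr,
      hD3 _ _ _ _ _ (by norm_num) hrne]
  have e2 : γ t = op (γ (t / 2)) (-1) (γ 0) := by
    have h := hgeo (t / 2) 0
    rwa [show 2 * (t / 2) - 0 = t by ring] at h
  have e3 : γ s = op (γ (t / 2)) (-1) (γ (t - s)) := by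
    have h := hgeo (t / 2) (t - s)
    rwa [show 2 * (t / 2) - (t - s) = s by ring] at h
  rw [← e2, ← e3]
end
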